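/- arXiv:2210.12377 — 5 statements merged into one kernel-verified Lean document; each statement's English description precedes it below -/
import Mathlib

section
/- If b is slowly varying on (0,∞) and α > 0, then ∫₀^t u^{α-1} b(u) du ≈ t^α b(t) for all t > 0, with implied constants independent of t. -/
/-- A measurable function `b : (0,∞) → (0,∞)` is slowly varying if for every `ε > 0`,
`t^ε b(t)` is equivalent (up to positive multiplicative constants) to a positive
non-decreasing function and `t^{-ε} b(t)` is equivalent to a positive non-increasing
function on `(0,∞)`. -/
def SlowlyVarying (b : ℝ → ℝ) : Prop :=
  Measurable b ∧ (∀ t : ℝ, 0 < t → 0 < b t) ∧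
  ∀ ε : ℝ, 0 < ε →
    (∃ g : ℝ → ℝ, (∀ t : ℝ, 0 < t → 0 < g t) ∧ MonotoneOn g (Set.Ioi 0) ∧
      ∃ c C : ℝ, 0 < c ∧ 0 < C ∧ ∀ t : ℝ, 0 < t →
        c * g t ≤ t ^ ε * b t ∧ t ^ ε * b t ≤ C * g t) ∧
    (∃ g : ℝ → ℝ, (∀ t : ℝ, 0 < t → 0 < g t) ∧ AntitoneOn g (Set.Ioi 0) ∧
      ∃ c C : ℝ, 0 < c ∧ 0 < C ∧ ∀ t : ℝ, 0 < t →
        c * g t ≤ t ^ (-ε) * b t ∧ t ^ (-ε) * b t ≤ C * g t)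

open MeasureTheory

open Set in
private lemma integrableOn_rpow_Ioc' {r t : ℝ} (hr : -1 < r) (ht : 0 < t) :
    IntegrableOn (fun u : ℝ => u ^ r) (Ioc 0 t) := by
  have := intervalIntegral.intervalIntegrable_rpow' (a := 0) (b := t) hr
  rwa [intervalIntegrable_iff_integrableOn_Ioc_of_le ht.le] at this

open Set in
private lemma integral_rpow_Ioc' {r t : ℝ} (hr : -1 < r) (ht : 0 < t) :
    ∫ u in Ioc (0:ℝ) t, u ^ r = t ^ (r + 1) / (r + 1) := by
  rw [← intervalIntegral.integral_of_le ht.le, integral_rpow (Or.inl hr),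
    Real.zero_rpow (by linarith), sub_zero]

/-- If `b` is slowly varying and `α > 0`, then `∫₀^t u^{α-1} b(u) du ≈ t^α b(t)`
for all `t > 0`, with constants independent of `t`. -/
theorem integral_rpow_mul_slowlyVarying_Ioc (b : ℝ → ℝ) (hb : SlowlyVarying b)
    (α : ℝ) (hα : 0 < α) :
    ∃ c C : ℝ, 0 < c ∧ 0 < C ∧ ∀ t : ℝ, 0 < t →
      c * (t ^ α * b t) ≤ (∫ u in Set.Ioc (0:ℝ) t, u ^ (α - 1) * b u) ∧
      (∫ u in Set.Ioc (0:ℝ) t, u ^ (α - 1) * b u) ≤ C * (t ^ α * b t) := by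
  open Set in
  obtain ⟨hbm, hbpos, hsv⟩ := hb
  obtain ⟨⟨g, hg_pos, hg_mono, c₁, C₁, hc₁, hC₁, hg⟩,
          ⟨h, hh_pos, hh_anti, c₂, C₂, hc₂, hC₂, hh⟩⟩ := hsv (α/2) (by positivity)
  set ε : ℝ := α/2 with hε
  have hε_pos : 0 < ε := by positivity
  have hαε : 0 < α - ε := by rw [hε]; linarith
  refine ⟨c₂ / (C₂ * (α + ε)), C₁ / (c₁ * (α - ε)), by positivity, by positivity, ?_⟩
  intro t ht
  have hfmeas : Measurable fun u : ℝ => u ^ (α - 1) * b u :=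
    (measurable_id.pow_const _).mul hbm
  have hgt : 0 < g t := hg_pos t ht
  have hht : 0 < h t := hh_pos t ht
  -- pointwise upper bound on Ioc 0 t
  have hup : ∀ u ∈ Ioc (0:ℝ) t, u ^ (α - 1) * b u ≤ (C₁ * g t) * u ^ (α - ε - 1) := by
    intro u hu
    have hu0 : 0 < u := hu.1
    have hsplit : u ^ (α - 1) = u ^ (α - ε - 1) * u ^ ε := by
      rw [← Real.rpow_add hu0]; ring_nf
    have h1 : u ^ ε * b u ≤ C₁ * g u := (hg u hu0).2
    have h2 : g u ≤ g t := hg_mono hu0 (by exact ht) hu.2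
    calc u ^ (α - 1) * b u = u ^ (α - ε - 1) * (u ^ ε * b u) := by rw [hsplit]; ring
      _ ≤ u ^ (α - ε - 1) * (C₁ * g t) := by
          apply mul_le_mul_of_nonneg_left _ (Real.rpow_nonneg hu0.le _)
          exact h1.trans (by nlinarith)
      _ = (C₁ * g t) * u ^ (α - ε - 1) := by ring
  -- pointwise lower bound
  have hlo : ∀ u ∈ Ioc (0:ℝ) t, (c₂ * h t) * u ^ (α + ε - 1) ≤ u ^ (α - 1) * b u := by
    intro u hu
    have hu0 : 0 < u := hu.1
    have hsplit : u ^ (α - 1) = u ^ (α + ε - 1) * u ^ (-ε) := by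
      rw [← Real.rpow_add hu0]; ring_nf
    have h1 : c₂ * h u ≤ u ^ (-ε) * b u := (hh u hu0).1
    have h2 : h t ≤ h u := hh_anti hu0 (by exact ht) hu.2
    calc (c₂ * h t) * u ^ (α + ε - 1) = u ^ (α + ε - 1) * (c₂ * h t) := by ring
      _ ≤ u ^ (α + ε - 1) * (u ^ (-ε) * b u) := by
          apply mul_le_mul_of_nonneg_left _ (Real.rpow_nonneg hu0.le _)
          exact le_trans (by nlinarith) h1
      _ = u ^ (α - 1) * b u := by rw [hsplit]; ring
  -- integrabilities
  have hbound_int : IntegrableOn (fun u : ℝ => (C₁ * g t) * u ^ (α - ε - 1)) (Ioc 0 t) :=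
    (integrableOn_rpow_Ioc' (by linarith) ht).const_mul _
  have hlo_int : IntegrableOn (fun u : ℝ => (c₂ * h t) * u ^ (α + ε - 1)) (Ioc 0 t) :=
    (integrableOn_rpow_Ioc' (by linarith) ht).const_mul _
  have hf_int : IntegrableOn (fun u : ℝ => u ^ (α - 1) * b u) (Ioc 0 t) := by
    refine Integrable.mono' hbound_int (hfmeas.aestronglyMeasurable) ?_
    rw [ae_restrict_iff' measurableSet_Ioc]
    filter_upwards with u hu
    have hu0 : 0 < u := hu.1
    have : 0 ≤ u ^ (α - 1) * b u :=
      mul_nonneg (Real.rpow_nonneg hu0.le _) (hbpos u hu0).le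
    rw [Real.norm_eq_abs, abs_of_nonneg this]
    exact hup u hu
  -- integral values
  have hval_up : ∫ u in Ioc (0:ℝ) t, (C₁ * g t) * u ^ (α - ε - 1)
      = (C₁ * g t) * (t ^ (α - ε) / (α - ε)) := by
    rw [MeasureTheory.integral_const_mul, integral_rpow_Ioc' (by linarith) ht]
    norm_num
  have hval_lo : ∫ u in Ioc (0:ℝ) t, (c₂ * h t) * u ^ (α + ε - 1)
      = (c₂ * h t) * (t ^ (α + ε) / (α + ε)) := by
    rw [MeasureTheory.integral_const_mul, integral_rpow_Ioc' (by linarith) ht]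
    norm_num
  constructor
  · -- lower bound
    have hmono := setIntegral_mono_on hlo_int hf_int measurableSet_Ioc hlo
    rw [hval_lo] at hmono
    refine le_trans ?_ hmono
    have hht' : t ^ (-ε) * b t / C₂ ≤ h t := by
      rw [div_le_iff₀ hC₂]; linarith [(hh t ht).2]
    have hsplit : t ^ α = t ^ (α + ε) * t ^ (-ε) := by
      rw [← Real.rpow_add ht]; ring_nf
    have hkey : c₂ / (C₂ * (α + ε)) * (t ^ α * b t)
        = (c₂ * (t ^ (-ε) * b t / C₂)) * (t ^ (α + ε) / (α + ε)) := by
      rw [hsplit]; field_simp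
    rw [hkey]
    have : 0 ≤ t ^ (α + ε) / (α + ε) := by positivity
    apply mul_le_mul_of_nonneg_right _ this
    nlinarith
  · -- upper bound
    have hmono := setIntegral_mono_on hf_int hbound_int measurableSet_Ioc hup
    rw [hval_up] at hmono
    refine hmono.trans ?_
    have hgt' : g t ≤ t ^ ε * b t / c₁ := by
      rw [le_div_iff₀ hc₁]; linarith [(hg t ht).1]
    have hsplit : t ^ α = t ^ (α - ε) * t ^ ε := by
      rw [← Real.rpow_add ht]; ring_nf
    have hkey : C₁ / (c₁ * (α - ε)) * (t ^ α * b t)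
        = (C₁ * (t ^ ε * b t / c₁)) * (t ^ (α - ε) / (α - ε)) := by
      rw [hsplit]; field_simp
    rw [hkey]
    have : 0 ≤ t ^ (α - ε) / (α - ε) := by positivity
    apply mul_le_mul_of_nonneg_right _ this
    nlinarith
end

section
/- If b is slowly varying on (0,∞) and ∫₁^∞ u^{-1} b(u) du < ∞, then the function b̃(t) := ∫_t^∞ u^{-1} b(u) du is slowly varying on (0,∞), and b(t) ≲ b̃(t) for all t > 0. -/
open MeasureTheory

/-!
Write `b̃(t) = ∫_t^∞ u⁻¹ b(u) du`. Since `t b(t)` is almost increasing (`φ s ≤ M φ t` for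
`s ≤ t`), `u⁻¹ b(u) ≳ b(t)/t` on `(t, 2t]`, whence `b ≲ b̃`. The function `t^{-ε} b̃(t)` is a
product of two positive non-increasing functions. For `s ≤ t`, splitting
`b̃(s) = ∫_s^t u⁻¹ b(u) du + b̃(t)` and using that `u^ε b(u)` is almost increasing gives
`s^ε ∫_s^t u⁻¹ b(u) du ≲ t^ε b(t) ≲ t^ε b̃(t)`, so `t^ε b̃(t)` is almost increasing, and an
almost increasing function is equivalent to its running supremum.
-/

open Set

noncomputable def tailIntegral (b : ℝ → ℝ) (t : ℝ) : ℝ := ∫ u in Ioi t, u⁻¹ * b u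

theorem exists_monotoneOn_equiv_of_le_mul {φ : ℝ → ℝ} {M : ℝ} (hφ : ∀ t, 0 < t → 0 < φ t)
    (hM : ∀ s t, 0 < s → s ≤ t → φ s ≤ M * φ t) :
    ∃ g : ℝ → ℝ, (∀ t, 0 < t → 0 < g t) ∧ MonotoneOn g (Ioi 0) ∧
      ∃ c C : ℝ, 0 < c ∧ 0 < C ∧ ∀ t, 0 < t → c * g t ≤ φ t ∧ φ t ≤ C * g t := by
  have hM0 : 0 < M := pos_of_mul_pos_left ((hφ 1 one_pos).trans_le (hM 1 1 one_pos le_rfl))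
    (hφ 1 one_pos).le
  have hbdd : ∀ t, BddAbove (φ '' Ioc 0 t) := fun t =>
    ⟨M * φ t, by rintro _ ⟨s, hs, rfl⟩; exact hM s t hs.1 hs.2⟩
  have hle : ∀ t, 0 < t → φ t ≤ sSup (φ '' Ioc 0 t) := fun t ht =>
    le_csSup (hbdd t) (mem_image_of_mem φ ⟨ht, le_rfl⟩)
  have hge : ∀ t, 0 < t → sSup (φ '' Ioc 0 t) ≤ M * φ t := fun t ht =>
    csSup_le ⟨φ t, mem_image_of_mem φ ⟨ht, le_rfl⟩⟩ (by rintro _ ⟨s, hs, rfl⟩; exact hM s t hs.1 hs.2)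
  refine ⟨fun t => sSup (φ '' Ioc 0 t), fun t ht => (hφ t ht).trans_le (hle t ht), ?_,
    M⁻¹, 1, inv_pos.2 hM0, one_pos, fun t ht => ⟨?_, by simpa using hle t ht⟩⟩
  · intro s hs t _ hst
    exact csSup_le_csSup (hbdd t) ⟨φ s, mem_image_of_mem φ ⟨hs, le_rfl⟩⟩
      (image_mono (Ioc_subset_Ioc_right hst))
  · rw [inv_mul_le_iff₀ hM0]
    exact hge t ht

theorem measurable_setIntegral_Ioi {f : ℝ → ℝ} (hf : Measurable f) :
    Measurable fun t => ∫ u in Ioi t, f u := by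
  have hind : ∀ t, ∫ u in Ioi t, f u = ∫ u, if t < u then f u else 0 := fun t => by
    rw [← integral_indicator measurableSet_Ioi]; rfl
  simp_rw [hind]
  exact ((Measurable.ite (measurableSet_lt measurable_fst measurable_snd)
    (hf.comp measurable_snd) measurable_const).stronglyMeasurable.integral_prod_right').measurable

theorem setIntegral_Ioi_eq_Ioc_add {f : ℝ → ℝ} {s t : ℝ} (hf : IntegrableOn f (Ioi s))
    (hst : s ≤ t) : ∫ u in Ioi s, f u = (∫ u in Ioc s t, f u) + ∫ u in Ioi t, f u := by
  rw [← intervalIntegral.integral_of_le hst,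
    intervalIntegral.integral_interval_add_Ioi hf (hf.mono_set (Ioi_subset_Ioi hst))]

theorem rpow_mul_setIntegral_Ioc_inv_mul_le {b : ℝ → ℝ} {ε K s t : ℝ} (hε : 0 < ε) (hs : 0 < s)
    (hK : 0 ≤ K) (hint : IntegrableOn (fun u => u⁻¹ * b u) (Ioc s t))
    (hbK : ∀ u ∈ Ioc s t, u ^ ε * b u ≤ K) :
    s ^ ε * ∫ u in Ioc s t, u⁻¹ * b u ≤ K / ε := by
  have hexp : -ε - 1 < -1 := by linarith
  have hpow : IntegrableOn (fun u : ℝ => K * u ^ (-ε - 1)) (Ioi s) :=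
    (integrableOn_Ioi_rpow_of_lt hexp hs).const_mul K
  have hpt : ∀ u ∈ Ioc s t, u⁻¹ * b u ≤ K * u ^ (-ε - 1) := by
    intro u hu
    have hu0 : 0 < u := hs.trans hu.1
    calc u⁻¹ * b u = u ^ (-ε - 1) * (u ^ ε * b u) := by
          rw [← mul_assoc, ← Real.rpow_add hu0, show -ε - 1 + ε = -1 by ring, Real.rpow_neg_one]
      _ ≤ u ^ (-ε - 1) * K := by gcongr; exact hbK u hu
      _ = K * u ^ (-ε - 1) := mul_comm _ _
  calc s ^ ε * ∫ u in Ioc s t, u⁻¹ * b u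
      ≤ s ^ ε * ∫ u in Ioi s, K * u ^ (-ε - 1) := by
        gcongr
        calc ∫ u in Ioc s t, u⁻¹ * b u ≤ ∫ u in Ioc s t, K * u ^ (-ε - 1) :=
              setIntegral_mono_on hint (hpow.mono_set Ioc_subset_Ioi_self) measurableSet_Ioc hpt
          _ ≤ ∫ u in Ioi s, K * u ^ (-ε - 1) :=
              setIntegral_mono_set hpow
                ((ae_restrict_iff' measurableSet_Ioi).2 (Filter.Eventually.of_forall
                  fun u hu => mul_nonneg hK (Real.rpow_nonneg (hs.trans hu).le _)))
                Ioc_subset_Ioi_self.eventuallyLE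
    _ = K / ε := by
        have hsε : s ^ ε ≠ 0 := (Real.rpow_pos_of_pos hs ε).ne'
        rw [integral_const_mul, integral_Ioi_rpow_of_lt hexp hs, sub_add_cancel,
          Real.rpow_neg hs.le]
        field_simp

namespace SlowlyVarying

variable {b : ℝ → ℝ}

theorem pos (hb : SlowlyVarying b) {t : ℝ} (ht : 0 < t) : 0 < b t := hb.2.1 t ht

theorem inv_mul_nonneg (hb : SlowlyVarying b) {u : ℝ} (hu : 0 < u) : 0 ≤ u⁻¹ * b u :=
  mul_nonneg (inv_nonneg.2 hu.le) (hb.pos hu).le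

theorem exists_rpow_mul_le_mul (hb : SlowlyVarying b) {ε : ℝ} (hε : 0 < ε) :
    ∃ M, 0 < M ∧ ∀ s t, 0 < s → s ≤ t → s ^ ε * b s ≤ M * (t ^ ε * b t) := by
  obtain ⟨g, -, hg, c, C, hc, hC, hgb⟩ := (hb.2.2 ε hε).1
  refine ⟨C / c, div_pos hC hc, fun s t hs hst => ?_⟩
  have ht : 0 < t := hs.trans_le hst
  calc s ^ ε * b s ≤ C * g s := (hgb s hs).2
    _ ≤ C * g t := by gcongr; exact hg hs ht hst
    _ = C / c * (c * g t) := by field_simp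
    _ ≤ C / c * (t ^ ε * b t) := by gcongr ?_ * ?_; exact (hgb t ht).1

theorem exists_mul_le_mul (hb : SlowlyVarying b) :
    ∃ M, 0 < M ∧ ∀ s t, 0 < s → s ≤ t → s * b s ≤ M * (t * b t) := by
  simpa only [Real.rpow_one] using hb.exists_rpow_mul_le_mul one_pos

theorem integrableOn_Ioi (hb : SlowlyVarying b)
    (hint : IntegrableOn (fun u => u⁻¹ * b u) (Ioi 1)) {t : ℝ} (ht : 0 < t) :
    IntegrableOn (fun u => u⁻¹ * b u) (Ioi t) := by
  rcases le_or_gt 1 t with h1 | h1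
  · exact hint.mono_set (Ioi_subset_Ioi h1)
  obtain ⟨M, hM, hMb⟩ := hb.exists_mul_le_mul
  rw [← Ioc_union_Ioi_eq_Ioi h1.le]
  refine IntegrableOn.union (Measure.integrableOn_of_bounded (M := M * b 1 / t ^ 2)
    (by simp [Real.volume_Ioc]) (measurable_inv.mul hb.1).aestronglyMeasurable ?_) hint
  rw [ae_restrict_iff' measurableSet_Ioc]
  refine Filter.Eventually.of_forall fun u hu => ?_
  have hu0 : 0 < u := ht.trans hu.1
  have hfu := hb.inv_mul_nonneg hu0
  have hub : u * b u ≤ M * b 1 := by simpa using hMb u 1 hu0 hu.2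
  rw [Real.norm_of_nonneg hfu, le_div_iff₀ (by positivity)]
  calc u⁻¹ * b u * t ^ 2 ≤ u⁻¹ * b u * u ^ 2 := by gcongr; exact hu.1.le
    _ = u * b u := by field_simp
    _ ≤ M * b 1 := hub

theorem tailIntegral_nonneg (hb : SlowlyVarying b) {t : ℝ} (ht : 0 ≤ t) : 0 ≤ tailIntegral b t :=
  setIntegral_nonneg measurableSet_Ioi fun _ hu => hb.inv_mul_nonneg (ht.trans_lt hu)

theorem setIntegral_Ioc_le_tailIntegral (hb : SlowlyVarying b)
    (hint : IntegrableOn (fun u => u⁻¹ * b u) (Ioi 1)) {s t : ℝ} (hs : 0 < s) (hst : s ≤ t) :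
    ∫ u in Ioc s t, u⁻¹ * b u ≤ tailIntegral b s := by
  rw [tailIntegral, setIntegral_Ioi_eq_Ioc_add (hb.integrableOn_Ioi hint hs) hst]
  exact le_add_of_nonneg_right (hb.tailIntegral_nonneg (hs.le.trans hst))

theorem exists_le_mul_tailIntegral (hb : SlowlyVarying b)
    (hint : IntegrableOn (fun u => u⁻¹ * b u) (Ioi 1)) :
    ∃ C, 0 < C ∧ ∀ t, 0 < t → b t ≤ C * tailIntegral b t := by
  obtain ⟨M, hM, hMb⟩ := hb.exists_mul_le_mul
  refine ⟨4 * M, by positivity, fun t ht => ?_⟩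
  have hbt := hb.pos ht
  have hpt : ∀ u ∈ Ioc t (2 * t), b t / (4 * M * t) ≤ u⁻¹ * b u := by
    intro u hu
    have hu0 : 0 < u := ht.trans hu.1
    have hbu := hb.pos hu0
    calc b t / (4 * M * t) = t * b t / (M * (2 * t) ^ 2) := by field_simp; ring
      _ ≤ M * (u * b u) / (M * (2 * t) ^ 2) :=
          div_le_div_of_nonneg_right (hMb t u ht hu.1.le) (by positivity)
      _ = u * b u / (2 * t) ^ 2 := by field_simp
      _ ≤ u * b u / u ^ 2 := by gcongr; exact hu.2
      _ = u⁻¹ * b u := by field_simp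
  calc b t = 4 * M * ((2 * t - t) * (b t / (4 * M * t))) := by field_simp; ring
    _ = 4 * M * ∫ _ in Ioc t (2 * t), b t / (4 * M * t) := by
        rw [setIntegral_const, smul_eq_mul, measureReal_def, Real.volume_Ioc,
          ENNReal.toReal_ofReal (by linarith)]
    _ ≤ 4 * M * ∫ u in Ioc t (2 * t), u⁻¹ * b u := by
        refine mul_le_mul_of_nonneg_left (setIntegral_mono_on (by simp [Real.volume_Ioc])
          ((hb.integrableOn_Ioi hint ht).mono_set Ioc_subset_Ioi_self) measurableSet_Ioc hpt)
          (by positivity)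
    _ ≤ 4 * M * tailIntegral b t := by
        gcongr
        exact hb.setIntegral_Ioc_le_tailIntegral hint ht (by linarith)

theorem tailIntegral_pos (hb : SlowlyVarying b)
    (hint : IntegrableOn (fun u => u⁻¹ * b u) (Ioi 1)) {t : ℝ} (ht : 0 < t) :
    0 < tailIntegral b t := by
  obtain ⟨C, hC, hbC⟩ := hb.exists_le_mul_tailIntegral hint
  exact pos_of_mul_pos_right ((hb.pos ht).trans_le (hbC t ht)) hC.le

theorem antitoneOn_tailIntegral (hb : SlowlyVarying b)
    (hint : IntegrableOn (fun u => u⁻¹ * b u) (Ioi 1)) :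
    AntitoneOn (tailIntegral b) (Ioi 0) := by
  intro s hs t _ hst
  unfold tailIntegral
  rw [setIntegral_Ioi_eq_Ioc_add (hb.integrableOn_Ioi hint hs) hst]
  exact le_add_of_nonneg_left
    (setIntegral_nonneg measurableSet_Ioc fun u hu => hb.inv_mul_nonneg (lt_trans hs hu.1))

theorem exists_rpow_mul_tailIntegral_le_mul (hb : SlowlyVarying b)
    (hint : IntegrableOn (fun u => u⁻¹ * b u) (Ioi 1)) {ε : ℝ} (hε : 0 < ε) :
    ∃ M, ∀ s t, 0 < s → s ≤ t →
      s ^ ε * tailIntegral b s ≤ M * (t ^ ε * tailIntegral b t) := by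
  obtain ⟨M, hM, hMb⟩ := hb.exists_rpow_mul_le_mul hε
  obtain ⟨C, hC, hbC⟩ := hb.exists_le_mul_tailIntegral hint
  refine ⟨1 + M * C / ε, fun s t hs hst => ?_⟩
  have ht : 0 < t := hs.trans_le hst
  have hIoc := rpow_mul_setIntegral_Ioc_inv_mul_le hε hs (by have := hb.pos ht; positivity)
    ((hb.integrableOn_Ioi hint hs).mono_set Ioc_subset_Ioi_self)
    fun u hu => hMb u t (hs.trans hu.1) hu.2
  have hTt := hb.tailIntegral_nonneg ht.le
  calc s ^ ε * tailIntegral b s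
      = s ^ ε * (∫ u in Ioc s t, u⁻¹ * b u) + s ^ ε * tailIntegral b t := by
        unfold tailIntegral
        rw [setIntegral_Ioi_eq_Ioc_add (hb.integrableOn_Ioi hint hs) hst, mul_add]
    _ ≤ M * (t ^ ε * b t) / ε + t ^ ε * tailIntegral b t := by
        gcongr
    _ ≤ M * (t ^ ε * (C * tailIntegral b t)) / ε + t ^ ε * tailIntegral b t := by
        gcongr
        exact hbC t ht
    _ = (1 + M * C / ε) * (t ^ ε * tailIntegral b t) := by field_simp; ring

end SlowlyVarying

/-- If `b` is slowly varying on `(0,∞)` and `∫₁^∞ u⁻¹ b(u) du < ∞`, then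
`b̃(t) := ∫_t^∞ u⁻¹ b(u) du` is slowly varying on `(0,∞)` and `b(t) ≲ b̃(t)` for `t > 0`. -/
theorem slowlyVarying_tilde (b : ℝ → ℝ) (hb : SlowlyVarying b)
    (hint : IntegrableOn (fun u => u⁻¹ * b u) (Set.Ioi (1:ℝ))) :
    SlowlyVarying (fun t => ∫ u in Set.Ioi t, u⁻¹ * b u) ∧
    ∃ C : ℝ, 0 < C ∧ ∀ t : ℝ, 0 < t → b t ≤ C * ∫ u in Set.Ioi t, u⁻¹ * b u := by
  have hpos : ∀ t, 0 < t → 0 < tailIntegral b t := fun t ht => hb.tailIntegral_pos hint ht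
  refine ⟨⟨measurable_setIntegral_Ioi (measurable_inv.mul hb.1), hpos, fun ε hε => ⟨?_, ?_⟩⟩,
    hb.exists_le_mul_tailIntegral hint⟩
  · obtain ⟨M, hM⟩ := hb.exists_rpow_mul_tailIntegral_le_mul hint hε
    exact exists_monotoneOn_equiv_of_le_mul
      (fun t ht => mul_pos (Real.rpow_pos_of_pos ht ε) (hpos t ht)) hM
  · refine ⟨fun t => t ^ (-ε) * tailIntegral b t,
      fun t ht => mul_pos (Real.rpow_pos_of_pos ht _) (hpos t ht), ?_,
      1, 1, one_pos, one_pos, fun t _ => by simp [tailIntegral]⟩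
    intro s hs t ht hst
    exact mul_le_mul (Real.rpow_le_rpow_of_nonpos hs hst (by linarith))
      (hb.antitoneOn_tailIntegral hint hs ht hst) (hpos t ht).le (Real.rpow_nonneg hs.le _)
end

section
/- Let 0 < α ≤ 1, let w, v be non-negative measurable functions on (0,∞), and let ψ be a non-negative measurable function on (0,∞)×(0,∞). Then the inequality ∫₀^∞ (∫₀^∞ ψ(t,u) h(u) du)^α w(t) dt ≲ ∫₀^∞ h(t)^α v(t) dt holds for all non-negative non-decreasing functions h on (0,∞) if and only if ∫₀^∞ (∫_x^∞ ψ(t,u) du)^α w(t) dt ≲ ∫_x^∞ v(t) dt holds for all x > 0, with the same implicit constants up to a factor depending only on α. -/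
/-!
Testing the inequality on `h = 𝟙_(x,∞)` gives the condition. Conversely, cut a non-decreasing `h`
into the dyadic level sets `S_j = {u > 0 | 2^j < h u}`, which are half-lines `(x_j, ∞)` with
`x_j ≥ 0` up to a null set. Then `h ≤ ∑_j 2^j 𝟙_{S_j}` and
`∑_j 2^{jα} 𝟙_{S_j} ≤ (1 - 2^{-α})⁻¹ h^α`, and since `α ≤ 1` the `α`-th power of a sum is at most
the sum of the `α`-th powers; so applying the condition on every `S_j` and summing proves the
inequality with constant `C (1 - 2^{-α})⁻¹`.
-/

open MeasureTheory Set ENNReal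

lemma ENNReal.iSup_rpow {ι : Sort*} {α : ℝ} (hα : 0 < α) (f : ι → ℝ≥0∞) :
    (⨆ i, f i) ^ α = ⨆ i, f i ^ α :=
  map_iSup (ENNReal.orderIsoRpow α hα) f

lemma ENNReal.rpow_tsum_le_tsum_rpow {ι : Type*} {α : ℝ} (hα0 : 0 < α) (hα1 : α ≤ 1)
    (f : ι → ℝ≥0∞) : (∑' i, f i) ^ α ≤ ∑' i, f i ^ α := by
  rw [ENNReal.tsum_eq_iSup_sum, ENNReal.iSup_rpow hα0]
  refine iSup_le fun s => le_trans ?_ (ENNReal.sum_le_tsum s)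
  induction s using Finset.cons_induction with
  | empty => simp [ENNReal.zero_rpow_of_pos hα0]
  | cons i s hi ih =>
    rw [Finset.sum_cons, Finset.sum_cons]
    exact (ENNReal.rpow_add_le_add_rpow _ _ hα0.le hα1).trans (add_le_add_right ih _)

lemma ENNReal.two_zpow_sub_natCast_rpow (k : ℤ) (n : ℕ) (β : ℝ) :
    ((2 : ℝ≥0∞) ^ (k - n)) ^ β = ((2 : ℝ≥0∞) ^ k) ^ β * ((2⁻¹ : ℝ≥0∞) ^ β) ^ n := by
  rw [ENNReal.zpow_sub two_ne_zero ofNat_ne_top, zpow_natCast, ENNReal.inv_pow,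
    ENNReal.mul_rpow_of_ne_top (ENNReal.zpow_ne_top two_ne_zero ofNat_ne_top k)
      (pow_ne_top (inv_ne_top.2 two_ne_zero)),
    ← ENNReal.rpow_natCast, ← ENNReal.rpow_mul, ← ENNReal.rpow_natCast, ← ENNReal.rpow_mul,
    mul_comm (n : ℝ)]

lemma ENNReal.tsum_ite_le_two_zpow_rpow (k : ℤ) (β : ℝ) :
    ∑' j : ℤ, (if j ≤ k then ((2 : ℝ≥0∞) ^ j) ^ β else 0) =
      ((2 : ℝ≥0∞) ^ k) ^ β * (1 - 2⁻¹ ^ β)⁻¹ := by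
  have hinj : Function.Injective fun n : ℕ => k - n := fun m n h => by simpa using h
  have hsupp : Function.support (fun j : ℤ => if j ≤ k then ((2 : ℝ≥0∞) ^ j) ^ β else 0) ⊆
      range fun n : ℕ => k - n := fun j hj => by
    have hjk : j ≤ k := by_contra fun h => hj (if_neg h)
    exact ⟨(k - j).toNat, show k - ((k - j).toNat : ℤ) = j by omega⟩
  rw [← hinj.tsum_eq hsupp]
  simp only [sub_le_self_iff, Nat.cast_nonneg, if_true, two_zpow_sub_natCast_rpow,
    ENNReal.tsum_mul_left, ENNReal.tsum_geometric]

lemma ENNReal.two_zpow_lt_iff_le {c : ℝ≥0∞} {k : ℤ} (hk : c ∈ Ioc (2 ^ k) (2 ^ (k + 1))) (j : ℤ) :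
    (2 : ℝ≥0∞) ^ j < c ↔ j ≤ k := by
  refine ⟨fun hj => ?_, fun hj => (zpow_le_of_le one_le_two hj).trans_lt hk.1⟩
  by_contra! hkj
  exact (hj.trans_le hk.2).not_ge (zpow_le_of_le one_le_two hkj)

lemma ENNReal.tsum_ite_two_zpow_lt_eq {c : ℝ≥0∞} {k : ℤ} (hk : c ∈ Ioc (2 ^ k) (2 ^ (k + 1)))
    (β : ℝ) : ∑' j : ℤ, (if (2 : ℝ≥0∞) ^ j < c then ((2 : ℝ≥0∞) ^ j) ^ β else 0) =
      ((2 : ℝ≥0∞) ^ k) ^ β * (1 - 2⁻¹ ^ β)⁻¹ := by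
  simp only [two_zpow_lt_iff_le hk, tsum_ite_le_two_zpow_rpow]

lemma ENNReal.le_tsum_ite_two_zpow_lt (c : ℝ≥0∞) :
    c ≤ ∑' j : ℤ, if (2 : ℝ≥0∞) ^ j < c then (2 : ℝ≥0∞) ^ j else 0 := by
  rcases eq_or_ne c 0 with rfl | hc0
  · exact zero_le
  rcases eq_or_ne c ⊤ with rfl | hct
  · simp only [zpow_lt_top two_ne_zero ofNat_ne_top, if_true]
    calc (⊤ : ℝ≥0∞) = ∑' _ : ℕ, 1 := (tsum_const_eq_top_of_ne_zero one_ne_zero).symm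
      _ ≤ ∑' n : ℕ, (2 : ℝ≥0∞) ^ (n : ℤ) :=
        ENNReal.tsum_le_tsum fun n => by simpa using one_le_pow₀ one_le_two
      _ ≤ ∑' j : ℤ, (2 : ℝ≥0∞) ^ j :=
        ENNReal.tsum_comp_le_tsum_of_injective Nat.cast_injective _
  obtain ⟨k, hk⟩ := exists_mem_Ioc_zpow hc0 hct one_lt_two ofNat_ne_top
  have hsum := tsum_ite_two_zpow_lt_eq hk 1
  simp only [rpow_one, one_sub_inv_two, inv_inv] at hsum
  calc c ≤ 2 ^ (k + 1) := hk.2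
    _ = 2 ^ k * 2 := by rw [ENNReal.zpow_add two_ne_zero ofNat_ne_top, zpow_one]
    _ = _ := hsum.symm

lemma ENNReal.tsum_ite_two_zpow_lt_rpow_le {α : ℝ} (hα : 0 < α) (c : ℝ≥0∞) :
    ∑' j : ℤ, (if (2 : ℝ≥0∞) ^ j < c then ((2 : ℝ≥0∞) ^ j) ^ α else 0) ≤
      (1 - 2⁻¹ ^ α)⁻¹ * c ^ α := by
  rcases eq_or_ne c 0 with rfl | hc0
  · simp
  rcases eq_or_ne c ⊤ with rfl | hct
  · rw [top_rpow_of_pos hα, mul_top (ENNReal.inv_ne_zero.2 (sub_ne_top one_ne_top))]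
    exact le_top
  obtain ⟨k, hk⟩ := exists_mem_Ioc_zpow hc0 hct one_lt_two ofNat_ne_top
  rw [tsum_ite_two_zpow_lt_eq hk, mul_comm]
  exact mul_le_mul_right (rpow_le_rpow hk.1.le hα.le) _

lemma ENNReal.inv_one_sub_inv_two_rpow_ne_top {α : ℝ} (hα : 0 < α) :
    (1 - (2 : ℝ≥0∞)⁻¹ ^ α)⁻¹ ≠ ⊤ :=
  inv_ne_top.2 (tsub_pos_of_lt (rpow_lt_one (by norm_num) hα)).ne'

lemma indicator_sep_two_zpow_lt_apply {X : Type*} {A : Set X} {h : X → ℝ≥0∞} {x : X}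
    (hx : x ∈ A) (j : ℤ) (c : ℝ≥0∞) :
    {y ∈ A | 2 ^ j < h y}.indicator (fun _ => c) x = if 2 ^ j < h x then c else 0 := by
  split_ifs with hj <;> simp [hx, hj]

lemma setLIntegral_tsum_indicator_mul {X ι : Type*} [MeasurableSpace X] [Countable ι]
    {μ : Measure X} {A : Set X} {S : ι → Set X} (hS : ∀ i, MeasurableSet (S i))
    (hSA : ∀ i, S i ⊆ A) (c : ι → ℝ≥0∞) {f : X → ℝ≥0∞} (hf : Measurable f) :
    ∫⁻ x in A, (∑' i, (S i).indicator (fun _ => c i) x) * f x ∂μ =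
      ∑' i, c i * ∫⁻ x in S i, f x ∂μ := by
  simp_rw [← ENNReal.tsum_mul_right, ← indicator_mul_left]
  rw [lintegral_tsum fun i => ((hf.const_mul _).indicator (hS i)).aemeasurable]
  refine tsum_congr fun i => ?_
  rw [lintegral_indicator (hS i), Measure.restrict_restrict (hS i), inter_eq_left.2 (hSA i),
    lintegral_const_mul _ hf]

section DyadicLevels

variable {X : Type*} [MeasurableSpace X] {μ : Measure X} {A : Set X} {α : ℝ} {h : X → ℝ≥0∞}

lemma rpow_setLIntegral_mul_le_tsum_levels (hA : MeasurableSet A) (hα0 : 0 < α) (hα1 : α ≤ 1)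
    {f : X → ℝ≥0∞} (hf : Measurable f) (hh : Measurable h) :
    (∫⁻ x in A, f x * h x ∂μ) ^ α ≤
      ∑' j : ℤ, ((2 : ℝ≥0∞) ^ j) ^ α * (∫⁻ x in {x ∈ A | 2 ^ j < h x}, f x ∂μ) ^ α := by
  have hS : ∀ j : ℤ, MeasurableSet {x ∈ A | 2 ^ j < h x} :=
    fun j => hA.inter (measurableSet_lt measurable_const hh)
  calc (∫⁻ x in A, f x * h x ∂μ) ^ α
      ≤ (∫⁻ x in A, (∑' j : ℤ, {x ∈ A | 2 ^ j < h x}.indicator (fun _ => 2 ^ j) x) * f x ∂μ)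
          ^ α := by
        refine rpow_le_rpow (setLIntegral_mono' hA fun x hx => ?_) hα0.le
        rw [mul_comm]
        gcongr
        simpa only [indicator_sep_two_zpow_lt_apply hx] using le_tsum_ite_two_zpow_lt (h x)
    _ = (∑' j : ℤ, 2 ^ j * ∫⁻ x in {x ∈ A | 2 ^ j < h x}, f x ∂μ) ^ α := by
        rw [setLIntegral_tsum_indicator_mul hS (fun j => sep_subset _ _) _ hf]
    _ ≤ ∑' j : ℤ, ((2 : ℝ≥0∞) ^ j) ^ α * (∫⁻ x in {x ∈ A | 2 ^ j < h x}, f x ∂μ) ^ α :=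
        (rpow_tsum_le_tsum_rpow hα0 hα1 _).trans_eq
          (tsum_congr fun j => mul_rpow_of_nonneg _ _ hα0.le)

lemma tsum_levels_mul_setLIntegral_le (hA : MeasurableSet A) (hα : 0 < α)
    {g : X → ℝ≥0∞} (hg : Measurable g) (hh : Measurable h) :
    ∑' j : ℤ, ((2 : ℝ≥0∞) ^ j) ^ α * ∫⁻ x in {x ∈ A | 2 ^ j < h x}, g x ∂μ ≤
      (1 - 2⁻¹ ^ α)⁻¹ * ∫⁻ x in A, h x ^ α * g x ∂μ := by
  rw [← setLIntegral_tsum_indicator_mul (S := fun j : ℤ => {x ∈ A | 2 ^ j < h x})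
    (fun j => hA.inter (measurableSet_lt measurable_const hh)) (fun j => sep_subset _ _) _ hg,
    ← lintegral_const_mul' _ _ (inv_one_sub_inv_two_rpow_ne_top hα)]
  refine setLIntegral_mono' hA fun x hx => ?_
  rw [← mul_assoc]
  gcongr
  simpa only [indicator_sep_two_zpow_lt_apply hx] using tsum_ite_two_zpow_lt_rpow_le hα (h x)

end DyadicLevels

lemma IsUpperSet.ae_eq_Ioi_sInf {S : Set ℝ} (hS : IsUpperSet S) (hne : S.Nonempty)
    (hbdd : BddBelow S) : S =ᵐ[volume] Ioi (sInf S) := by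
  have hIoi : Ioi (sInf S) ⊆ S := by
    rw [← (isGLB_csInf hne hbdd).biUnion_Ioi_eq]
    exact iUnion₂_subset fun x hx => hS.Ioi_subset hx
  have hIci : S ⊆ Ici (sInf S) := fun x hx => csInf_le hbdd hx
  exact (hIci.eventuallyLE.trans Ioi_ae_eq_Ici.symm.le).antisymm hIoi.eventuallyLE

section KernelInequality

variable {T : Type*} [MeasurableSpace T] {μ : Measure T} {α : ℝ} {w : T → ℝ≥0∞}
  {v : ℝ → ℝ≥0∞} {ψ : T → ℝ → ℝ≥0∞} {C : ℝ≥0∞}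

lemma lintegral_rpow_setLIntegral_Ioi_le_of_forall_gt (hα : 0 < α) (hw : Measurable w)
    (hψ : Measurable (Function.uncurry ψ)) {a : ℝ}
    (H : ∀ x, a < x → ∫⁻ t, (∫⁻ u in Ioi x, ψ t u) ^ α * w t ∂μ ≤ C * ∫⁻ u in Ioi x, v u) :
    ∫⁻ t, (∫⁻ u in Ioi a, ψ t u) ^ α * w t ∂μ ≤ C * ∫⁻ u in Ioi a, v u := by
  obtain ⟨x, hx_anti, hx_gt, hx_lim⟩ := exists_seq_strictAnti_tendsto a
  have hIoi_mono : Monotone fun n => Ioi (x n) :=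
    fun m n hmn => Ioi_subset_Ioi (hx_anti.antitone hmn)
  have hIoi_sup : ∀ g : ℝ → ℝ≥0∞, ∫⁻ u in Ioi a, g u = ⨆ n, ∫⁻ u in Ioi (x n), g u := fun g => by
    rw [← (isGLB_of_tendsto_atTop hx_anti.antitone hx_lim).iUnion_Ioi_eq,
      setLIntegral_iUnion_of_directed _ hIoi_mono.directed_le]
  calc ∫⁻ t, (∫⁻ u in Ioi a, ψ t u) ^ α * w t ∂μ
      = ∫⁻ t, ⨆ n, (∫⁻ u in Ioi (x n), ψ t u) ^ α * w t ∂μ := by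
        simp_rw [hIoi_sup, ENNReal.iSup_rpow hα, ENNReal.iSup_mul]
    _ = ⨆ n, ∫⁻ t, (∫⁻ u in Ioi (x n), ψ t u) ^ α * w t ∂μ :=
        lintegral_iSup (fun n => (hψ.lintegral_prod_right.pow_const α).mul hw)
          fun m n hmn t =>
            mul_le_mul_left (rpow_le_rpow (lintegral_mono_set (hIoi_mono hmn)) hα.le) _
    _ ≤ ⨆ n, C * ∫⁻ u in Ioi (x n), v u := iSup_mono fun n => H _ (hx_gt n)
    _ = C * ∫⁻ u in Ioi a, v u := by rw [hIoi_sup, ENNReal.mul_iSup]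

lemma lintegral_rpow_setLIntegral_le_of_isUpperSet (hα : 0 < α) (hw : Measurable w)
    (hψ : Measurable (Function.uncurry ψ))
    (H : ∀ x, 0 < x → ∫⁻ t, (∫⁻ u in Ioi x, ψ t u) ^ α * w t ∂μ ≤ C * ∫⁻ u in Ioi x, v u)
    {S : Set ℝ} (hS : IsUpperSet S) (hS0 : S ⊆ Ioi 0) :
    ∫⁻ t, (∫⁻ u in S, ψ t u) ^ α * w t ∂μ ≤ C * ∫⁻ u in S, v u := by
  rcases S.eq_empty_or_nonempty with rfl | hne
  · simp [zero_rpow_of_pos hα]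
  have hbdd : BddBelow S := ⟨0, fun u hu => (hS0 hu).le⟩
  have hae := hS.ae_eq_Ioi_sInf hne hbdd
  simp_rw [setLIntegral_congr hae]
  exact lintegral_rpow_setLIntegral_Ioi_le_of_forall_gt hα hw hψ fun x hx =>
    H x ((le_csInf hne fun u hu => (hS0 hu).le).trans_lt hx)

lemma lintegral_rpow_setLIntegral_Ioi_le_of_forall_monotoneOn (hα : 0 < α)
    (H : ∀ h : ℝ → ℝ≥0∞, Measurable h → (∀ ⦃s t : ℝ⦄, 0 < s → s ≤ t → h s ≤ h t) →
      ∫⁻ t, (∫⁻ u in Ioi 0, ψ t u * h u) ^ α * w t ∂μ ≤ C * ∫⁻ u in Ioi 0, h u ^ α * v u)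
    {x : ℝ} (hx : 0 < x) :
    ∫⁻ t, (∫⁻ u in Ioi x, ψ t u) ^ α * w t ∂μ ≤ C * ∫⁻ u in Ioi x, v u := by
  have hmono : ∀ ⦃s t : ℝ⦄, 0 < s → s ≤ t →
      (Ioi x).indicator (1 : ℝ → ℝ≥0∞) s ≤ (Ioi x).indicator 1 t := fun s t _ hst => by
    by_cases hs : s ∈ Ioi x
    · rw [indicator_of_mem hs, indicator_of_mem (mem_Ioi.2 (hs.trans_le hst))]
      exact le_rfl
    · rw [indicator_of_notMem hs]
      exact zero_le
  have hrpow : ∀ u, (Ioi x).indicator (1 : ℝ → ℝ≥0∞) u ^ α = (Ioi x).indicator 1 u := fun u => by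
    by_cases hu : x < u <;> simp [hu, zero_rpow_of_pos hα]
  have hrestrict : ∀ f : ℝ → ℝ≥0∞, ∫⁻ u in Ioi 0, (Ioi x).indicator f u = ∫⁻ u in Ioi x, f u :=
    fun f => by
      rw [lintegral_indicator measurableSet_Ioi, Measure.restrict_restrict measurableSet_Ioi,
        inter_eq_left.2 (Ioi_subset_Ioi hx.le)]
  simpa only [hrpow, ← indicator_mul_right, ← indicator_mul_left, Pi.one_apply, mul_one, one_mul,
    hrestrict] using H _ (measurable_one.indicator measurableSet_Ioi) hmono

lemma lintegral_rpow_setLIntegral_mul_le_of_forall_Ioi (hα0 : 0 < α) (hα1 : α ≤ 1)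
    (hw : Measurable w) (hv : Measurable v) (hψ : Measurable (Function.uncurry ψ))
    (H : ∀ x, 0 < x → ∫⁻ t, (∫⁻ u in Ioi x, ψ t u) ^ α * w t ∂μ ≤ C * ∫⁻ u in Ioi x, v u)
    {h : ℝ → ℝ≥0∞} (hh : Measurable h) (hmono : ∀ ⦃s t : ℝ⦄, 0 < s → s ≤ t → h s ≤ h t) :
    ∫⁻ t, (∫⁻ u in Ioi 0, ψ t u * h u) ^ α * w t ∂μ ≤
      C * (1 - 2⁻¹ ^ α)⁻¹ * ∫⁻ u in Ioi 0, h u ^ α * v u := by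
  set S : ℤ → Set ℝ := fun j => {u ∈ Ioi 0 | 2 ^ j < h u}
  have hS : ∀ j, IsUpperSet (S j) := fun j s t hst hs =>
    ⟨hs.1.trans_le hst, hs.2.trans_le (hmono hs.1 hst)⟩
  have hF : ∀ j, Measurable fun t => (∫⁻ u in S j, ψ t u) ^ α * w t :=
    fun j => (hψ.lintegral_prod_right.pow_const α).mul hw
  calc ∫⁻ t, (∫⁻ u in Ioi 0, ψ t u * h u) ^ α * w t ∂μ
      ≤ ∫⁻ t, (∑' j, ((2 : ℝ≥0∞) ^ j) ^ α * (∫⁻ u in S j, ψ t u) ^ α) * w t ∂μ :=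
        lintegral_mono fun t => mul_le_mul_left
          (rpow_setLIntegral_mul_le_tsum_levels measurableSet_Ioi hα0 hα1 hψ.of_uncurry_left hh) _
    _ = ∑' j, ((2 : ℝ≥0∞) ^ j) ^ α * ∫⁻ t, (∫⁻ u in S j, ψ t u) ^ α * w t ∂μ := by
        simp_rw [← ENNReal.tsum_mul_right, mul_assoc]
        rw [lintegral_tsum fun j => ((hF j).const_mul _).aemeasurable]
        simp_rw [lintegral_const_mul _ (hF _)]
    _ ≤ ∑' j, ((2 : ℝ≥0∞) ^ j) ^ α * (C * ∫⁻ u in S j, v u) := by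
        gcongr with j
        exact lintegral_rpow_setLIntegral_le_of_isUpperSet hα0 hw hψ H (hS j) (sep_subset _ _)
    _ = C * ∑' j, ((2 : ℝ≥0∞) ^ j) ^ α * ∫⁻ u in S j, v u := by
        simp_rw [← ENNReal.tsum_mul_left, mul_left_comm]
    _ ≤ C * ((1 - 2⁻¹ ^ α)⁻¹ * ∫⁻ u in Ioi 0, h u ^ α * v u) := by
        gcongr
        exact tsum_levels_mul_setLIntegral_le measurableSet_Ioi hα0 hv hh
    _ = C * (1 - 2⁻¹ ^ α)⁻¹ * ∫⁻ u in Ioi 0, h u ^ α * v u := (mul_assoc _ _ _).symm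

end KernelInequality

/-- Theorem 3.3(b) of Heinig–Maligranda: for `0 < α ≤ 1`, kernels `ψ ≥ 0` and weights
`w, v ≥ 0`, the inequality `∫₀^∞ (∫₀^∞ ψ(t,u) h(u) du)^α w(t) dt ≲ ∫₀^∞ h^α v`
holds for all non-negative non-decreasing `h` iff
`∫₀^∞ (∫_x^∞ ψ(t,u) du)^α w(t) dt ≲ ∫_x^∞ v` holds for all `x > 0`. -/
theorem heinig_maligranda (α : ℝ) (hα0 : 0 < α) (hα1 : α ≤ 1)
    (w v : ℝ → ℝ≥0∞) (ψ : ℝ → ℝ → ℝ≥0∞)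
    (hw : Measurable w) (hv : Measurable v) (hψ : Measurable (Function.uncurry ψ)) :
    (∃ C : ℝ≥0∞, C ≠ ⊤ ∧ ∀ h : ℝ → ℝ≥0∞, Measurable h →
        (∀ ⦃s t : ℝ⦄, 0 < s → s ≤ t → h s ≤ h t) →
        ∫⁻ t in Set.Ioi (0:ℝ), (∫⁻ u in Set.Ioi (0:ℝ), ψ t u * h u) ^ α * w t ≤
          C * ∫⁻ t in Set.Ioi (0:ℝ), h t ^ α * v t) ↔
    (∃ C : ℝ≥0∞, C ≠ ⊤ ∧ ∀ x : ℝ, 0 < x →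
        ∫⁻ t in Set.Ioi (0:ℝ), (∫⁻ u in Set.Ioi x, ψ t u) ^ α * w t ≤
          C * ∫⁻ t in Set.Ioi x, v t) := by
  constructor
  · rintro ⟨C, hC, H⟩
    exact ⟨C, hC, fun x hx => lintegral_rpow_setLIntegral_Ioi_le_of_forall_monotoneOn hα0 H hx⟩
  · rintro ⟨C, hC, H⟩
    exact ⟨C * (1 - 2⁻¹ ^ α)⁻¹, mul_ne_top hC (inv_one_sub_inv_two_rpow_ne_top hα0),
      fun h hh hmono =>
        lintegral_rpow_setLIntegral_mul_le_of_forall_Ioi hα0 hα1 hw hv hψ H hh hmono⟩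
end

section
/- Let Q be a positive linear operator on positive functions on (0,∞) whose iterates satisfy (Q^{k+1}σ)(t) = (1/k!)∫_t^∞ σ(x) ln^k(B(t)/B(x)) B(x)^{-1} b(x) dx/x for all k ≥ 0, where B(t) = ∫_t^∞ b(s) ds/s with b positive and B finite. Suppose (Qσ)(t) ≤ c σ(t) for all t > 0 and some constant c > 0. Then for any ε > 0 with ε·max(c,1) < 1, one has ∫_t^∞ σ(x) B(x)^{-ε-1} b(x) dx/x ≤ (c/(1-εc)) σ(t) B(t)^{-ε} for all t > 0. -/
open MeasureTheory Set

/-- Summing the geometric series of iterates: if `Q` is a positive linear operator whose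
iterates have the log-kernel form and `Qσ ≤ cσ`, then for `ε > 0` with `ε·max(c,1) < 1`,
`∫_t^∞ σ(x) B(x)^{-ε-1} b(x) dx/x ≤ (c/(1-εc)) σ(t) B(t)^{-ε}` for all `t > 0`. -/
theorem iterate_geometric_bound (Q : (ℝ → ℝ) → (ℝ → ℝ)) (σ b : ℝ → ℝ) (c ε : ℝ)
    (hσ : ∀ t : ℝ, 0 < t → 0 < σ t) (hb : ∀ t : ℝ, 0 < t → 0 < b t)
    (hc : 0 < c) (hε : 0 < ε) (hεc : ε * max c 1 < 1)
    (hmono : ∀ f g : ℝ → ℝ, (∀ t : ℝ, 0 < t → f t ≤ g t) → ∀ t : ℝ, 0 < t → Q f t ≤ Q g t)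
    (hsmul : ∀ (a : ℝ) (f : ℝ → ℝ) (t : ℝ), 0 < t → Q (fun s => a * f s) t = a * Q f t)
    (B : ℝ → ℝ) (hB : ∀ t : ℝ, B t = ∫ s in Set.Ioi t, b s / s)
    (hBfin : ∀ t : ℝ, 0 < t → IntegrableOn (fun s => b s / s) (Set.Ioi t))
    (hiter : ∀ (k : ℕ) (t : ℝ), 0 < t → Q^[k + 1] σ t = (1 / (Nat.factorial k : ℝ)) *
      ∫ x in Set.Ioi t, σ x * (Real.log (B t / B x)) ^ k * (B x)⁻¹ * (b x / x))
    (hQσ : ∀ t : ℝ, 0 < t → Q σ t ≤ c * σ t)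
    (hconv : ∀ t : ℝ, 0 < t →
      IntegrableOn (fun x => σ x * B x ^ (-ε - 1) * (b x / x)) (Set.Ioi t)) :
    ∀ t : ℝ, 0 < t →
      (∫ x in Set.Ioi t, σ x * B x ^ (-ε - 1) * (b x / x)) ≤
        (c / (1 - ε * c)) * σ t * B t ^ (-ε) := by
  -- basic numeric facts
  have hεc1 : ε * c < 1 :=
    lt_of_le_of_lt (mul_le_mul_of_nonneg_left (le_max_left c 1) hε.le) hεc
  have h1εc : 0 < 1 - ε * c := by linarith
  -- iterate bound
  have hIt : ∀ k : ℕ, ∀ s : ℝ, 0 < s → Q^[k + 1] σ s ≤ c ^ (k + 1) * σ s := by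
    intro k
    induction k with
    | zero => intro s hs; simpa using hQσ s hs
    | succ k ih =>
      intro s hs
      rw [Function.iterate_succ_apply']
      calc Q (Q^[k + 1] σ) s ≤ Q (fun u => c ^ (k + 1) * σ u) s := hmono _ _ ih s hs
        _ = c ^ (k + 1) * Q σ s := hsmul _ _ s hs
        _ ≤ c ^ (k + 1) * (c * σ s) :=
            mul_le_mul_of_nonneg_left (hQσ s hs) (by positivity)
        _ = c ^ (k + 1 + 1) * σ s := by ring
  -- positivity of B
  have hBpos : ∀ u : ℝ, 0 < u → 0 < B u := by
    intro u hu
    rw [hB u]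
    have h1 : 0 ≤ᵐ[volume.restrict (Ioi u)] fun s => b s / s := by
      filter_upwards [ae_restrict_mem measurableSet_Ioi] with s hs
      exact (div_pos (hb s (hu.trans hs)) (hu.trans hs)).le
    rw [setIntegral_pos_iff_support_of_nonneg_ae h1 (hBfin u hu)]
    have h2 : (0 : ENNReal) < volume (Ioi u) := by
      rw [Real.volume_Ioi]; exact ENNReal.zero_lt_top
    refine h2.trans_le (measure_mono fun s hs => ?_)
    exact ⟨(div_pos (hb s (hu.trans hs)) (hu.trans hs)).ne', hs⟩
  -- antitonicity of B on (0,∞)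
  have hBanti : ∀ u v : ℝ, 0 < u → u ≤ v → B v ≤ B u := by
    intro u v hu huv
    rw [hB u, hB v]
    refine setIntegral_mono_set (hBfin u hu) ?_ ((Ioi_subset_Ioi huv).eventuallyLE)
    filter_upwards [ae_restrict_mem measurableSet_Ioi] with s hs
    exact (div_pos (hb s (hu.trans hs)) (hu.trans hs)).le
  -- main part
  intro t ht
  have hBt : 0 < B t := hBpos t ht
  -- measurable extension of B
  set C : ℝ → ℝ := fun x => if t < x then B x else B t with hCdef
  have hCanti : Antitone C := by
    intro u v huv
    by_cases h2 : t < u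
    · have h1 : t < v := h2.trans_le huv
      simp only [C, if_pos h1, if_pos h2]
      exact hBanti u v (ht.trans h2) huv
    · by_cases h1 : t < v
      · simp only [C, if_pos h1, if_neg h2]
        exact hBanti t v ht h1.le
      · simp only [C, if_neg h1, if_neg h2]
        exact le_rfl
  have hCmeas : Measurable C := hCanti.measurable
  have hCB : ∀ x ∈ Ioi t, C x = B x := fun x hx => if_pos hx
  -- abbreviations
  set L : ℝ → ℝ := fun x => Real.log (B t / B x) with hLdef
  set g : ℝ → ℝ := fun x => σ x * B x ^ (-ε - 1) * (b x / x) with hgdef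
  set term : ℕ → ℝ → ℝ :=
    fun k x => ε ^ k / (Nat.factorial k : ℝ) * (σ x * L x ^ k * (B x)⁻¹ * (b x / x))
    with htermdef
  -- pointwise facts on Ioi t
  have hLnn : ∀ x ∈ Ioi t, 0 ≤ L x := by
    intro x hx
    apply Real.log_nonneg
    rw [le_div_iff₀ (hBpos x (ht.trans hx)), one_mul]
    exact hBanti t x ht (le_of_lt hx)
  have htermnn : ∀ x ∈ Ioi t, ∀ k : ℕ, 0 ≤ term k x := by
    intro x hx k
    have hx0 : 0 < x := ht.trans hx
    have := hLnn x hx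
    have h1 : (0:ℝ) ≤ ε ^ k / (Nat.factorial k : ℝ) := by positivity
    have h2 : (0:ℝ) ≤ σ x * L x ^ k * (B x)⁻¹ * (b x / x) := by
      apply mul_nonneg (mul_nonneg (mul_nonneg (hσ x hx0).le (pow_nonneg this k))
        (inv_nonneg.mpr (hBpos x hx0).le))
      exact (div_pos (hb x hx0) hx0).le
    exact mul_nonneg h1 h2
  have hgnnpt : ∀ x ∈ Ioi t, 0 ≤ g x := by
    intro x hx
    have hx0 : 0 < x := ht.trans hx
    apply mul_nonneg (mul_nonneg (hσ x hx0).le (Real.rpow_nonneg (hBpos x hx0).le _))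
    exact (div_pos (hb x hx0) hx0).le
  have hterm_eq : ∀ x ∈ Ioi t, ∀ k : ℕ,
      term k x = (σ x * (B x)⁻¹ * (b x / x)) * ((ε * L x) ^ k / (Nat.factorial k : ℝ)) := by
    intro x hx k
    simp only [term]
    rw [mul_pow]
    ring
  have hsummable : ∀ x ∈ Ioi t, Summable fun k => term k x := by
    intro x hx
    have : Summable fun k : ℕ =>
        (σ x * (B x)⁻¹ * (b x / x)) * ((ε * L x) ^ k / (Nat.factorial k : ℝ)) :=
      (Real.summable_pow_div_factorial (ε * L x)).mul_left _
    exact this.congr fun k => (hterm_eq x hx k).symm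
  -- the pointwise sum
  have htsum : ∀ x ∈ Ioi t, ∑' k : ℕ, term k x = B t ^ ε * g x := by
    intro x hx
    have hx0 : 0 < x := ht.trans hx
    have hBx : 0 < B x := hBpos x hx0
    have hexp : ∑' k : ℕ, (ε * L x) ^ k / (Nat.factorial k : ℝ) = Real.exp (ε * L x) := by
      rw [Real.exp_eq_exp_ℝ, NormedSpace.exp_eq_tsum_div]
    have h1 : Real.exp (ε * L x) = (B t / B x) ^ ε := by
      rw [Real.rpow_def_of_pos (div_pos hBt hBx), mul_comm]
    have h2 : B x ^ (-ε - 1) = (B x ^ ε)⁻¹ * (B x)⁻¹ := by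
      rw [← Real.rpow_neg_one (B x), ← Real.rpow_neg hBx.le, ← Real.rpow_add hBx]
      ring_nf
    calc ∑' k : ℕ, term k x
        = ∑' k : ℕ, (σ x * (B x)⁻¹ * (b x / x)) * ((ε * L x) ^ k / (Nat.factorial k : ℝ)) :=
          tsum_congr (hterm_eq x hx)
      _ = (σ x * (B x)⁻¹ * (b x / x)) * Real.exp (ε * L x) := by rw [tsum_mul_left, hexp]
      _ = B t ^ ε * g x := by
          rw [h1, Real.div_rpow hBt.le hBx.le]
          simp only [g]
          rw [h2]
          have hBxε : (0:ℝ) < B x ^ ε := Real.rpow_pos_of_pos hBx ε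
          field_simp
  -- measurability of term k
  have hgmeas : AEStronglyMeasurable g (volume.restrict (Ioi t)) :=
    (hconv t ht).aestronglyMeasurable
  have hhmeas : ∀ k : ℕ, Measurable fun x =>
      C x ^ ε * (ε * Real.log (B t / C x)) ^ k / (Nat.factorial k : ℝ) := by
    intro k
    apply Measurable.div_const
    apply Measurable.mul
    · exact (Real.continuous_rpow_const hε.le).measurable.comp hCmeas
    · exact ((measurable_const.mul (Real.measurable_log.comp
        (measurable_const.div hCmeas))).pow_const k)
  have htermmeas : ∀ k : ℕ, AEStronglyMeasurable (term k) (volume.restrict (Ioi t)) := by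
    intro k
    refine (hgmeas.mul (hhmeas k).aestronglyMeasurable).congr ?_
    filter_upwards [ae_restrict_mem measurableSet_Ioi] with x hx'
    have hx0 : 0 < x := ht.trans hx'
    have hBx : 0 < B x := hBpos x hx0
    simp only [Pi.mul_apply]
    rw [hCB x hx']
    have key : B x ^ (-ε - 1) * B x ^ ε = (B x)⁻¹ := by
      rw [← Real.rpow_add hBx, ← Real.rpow_neg_one (B x)]
      ring_nf
    simp only [term, g]
    rw [← key]
    ring
  -- integrability and bound of term k
  have hgint := hconv t ht
  have hdom : Integrable (fun x => B t ^ ε * g x) (volume.restrict (Ioi t)) :=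
    hgint.const_mul _
  have htermle : ∀ x ∈ Ioi t, ∀ k : ℕ, term k x ≤ B t ^ ε * g x := by
    intro x hx k
    rw [← htsum x hx]
    exact Summable.le_tsum (hsummable x hx) k fun j _ => htermnn x hx j
  have htermint : ∀ k : ℕ, Integrable (term k) (volume.restrict (Ioi t)) := by
    intro k
    refine hdom.mono (htermmeas k) ?_
    filter_upwards [ae_restrict_mem measurableSet_Ioi] with x hx'
    rw [Real.norm_eq_abs, Real.norm_eq_abs, abs_of_nonneg (htermnn x hx' k),
      abs_of_nonneg (mul_nonneg (Real.rpow_nonneg hBt.le ε) (hgnnpt x hx'))]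
    exact htermle x hx' k
  -- the value bound for each term's integral
  have htermval : ∀ k : ℕ, (∫ x in Ioi t, term k x) ≤ ε ^ k * (c ^ (k + 1) * σ t) := by
    intro k
    have hJ := hiter k t ht
    have h1 : (∫ x in Ioi t, term k x)
        = ε ^ k / (Nat.factorial k : ℝ) *
          ∫ x in Ioi t, σ x * L x ^ k * (B x)⁻¹ * (b x / x) := by
      simp only [term]
      exact integral_const_mul _ _
    have h2 : (∫ x in Ioi t, term k x) = ε ^ k * Q^[k + 1] σ t := by
      rw [h1, hJ]
      ring
    rw [h2]
    exact mul_le_mul_of_nonneg_left (hIt k t ht) (by positivity)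
  -- ENNReal computation
  have hgnn : 0 ≤ᵐ[volume.restrict (Ioi t)] g := by
    filter_upwards [ae_restrict_mem measurableSet_Ioi] with x hx
    exact hgnnpt x hx
  have htermnnae : ∀ k : ℕ, 0 ≤ᵐ[volume.restrict (Ioi t)] term k := by
    intro k
    filter_upwards [ae_restrict_mem measurableSet_Ioi] with x hx
    exact htermnn x hx k
  have hgeo : Summable fun k : ℕ => ε ^ k * (c ^ (k + 1) * σ t) := by
    have : Summable fun k : ℕ => (c * σ t) * (ε * c) ^ k :=
      (summable_geometric_of_lt_one (mul_nonneg hε.le hc.le) hεc1).mul_left _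
    exact this.congr fun k => by rw [mul_pow]; ring
  have hgeosum : ∑' k : ℕ, ε ^ k * (c ^ (k + 1) * σ t) = c * σ t / (1 - ε * c) := by
    have h1 : ∀ k : ℕ, ε ^ k * (c ^ (k + 1) * σ t) = (c * σ t) * (ε * c) ^ k := by
      intro k; rw [mul_pow]; ring
    rw [tsum_congr h1, tsum_mul_left, tsum_geometric_of_lt_one (mul_nonneg hε.le hc.le) hεc1]
    rw [div_eq_mul_inv]
  have key : ENNReal.ofReal (∫ x in Ioi t, g x)
      ≤ ENNReal.ofReal (B t ^ (-ε) * (c * σ t / (1 - ε * c))) := by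
    rw [ofReal_integral_eq_lintegral_ofReal hgint hgnn]
    have step1 : ∫⁻ x in Ioi t, ENNReal.ofReal (g x)
        = ∫⁻ x in Ioi t, ENNReal.ofReal (B t ^ (-ε)) * ∑' k : ℕ, ENNReal.ofReal (term k x) := by
      apply lintegral_congr_ae
      filter_upwards [ae_restrict_mem measurableSet_Ioi] with x hx'
      have h1 : g x = B t ^ (-ε) * ∑' k : ℕ, term k x := by
        rw [htsum x hx', ← mul_assoc, ← Real.rpow_add hBt]
        norm_num
      rw [h1, ENNReal.ofReal_mul (Real.rpow_nonneg hBt.le _),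
        ENNReal.ofReal_tsum_of_nonneg (fun k => htermnn x hx' k) (hsummable x hx')]
    rw [step1, lintegral_const_mul' _ _ ENNReal.ofReal_ne_top,
      lintegral_tsum fun k => ((htermmeas k).aemeasurable).ennreal_ofReal]
    have step2 : ∀ k : ℕ, ∫⁻ x in Ioi t, ENNReal.ofReal (term k x)
        = ENNReal.ofReal (∫ x in Ioi t, term k x) :=
      fun k => (ofReal_integral_eq_lintegral_ofReal (htermint k) (htermnnae k)).symm
    calc ENNReal.ofReal (B t ^ (-ε)) * ∑' k : ℕ, ∫⁻ x in Ioi t, ENNReal.ofReal (term k x)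
        = ENNReal.ofReal (B t ^ (-ε)) * ∑' k : ℕ, ENNReal.ofReal (∫ x in Ioi t, term k x) := by
          rw [tsum_congr step2]
      _ ≤ ENNReal.ofReal (B t ^ (-ε)) *
          ∑' k : ℕ, ENNReal.ofReal (ε ^ k * (c ^ (k + 1) * σ t)) :=
          mul_le_mul_right (ENNReal.tsum_le_tsum fun k =>
            ENNReal.ofReal_le_ofReal (htermval k)) _
      _ = ENNReal.ofReal (B t ^ (-ε)) * ENNReal.ofReal (c * σ t / (1 - ε * c)) := by
          rw [← ENNReal.ofReal_tsum_of_nonneg (fun k => mul_nonneg (pow_nonneg hε.le k)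
            (mul_nonneg (pow_nonneg hc.le _) (hσ t ht).le)) hgeo, hgeosum]
      _ = ENNReal.ofReal (B t ^ (-ε) * (c * σ t / (1 - ε * c))) :=
          (ENNReal.ofReal_mul (Real.rpow_nonneg hBt.le _)).symm
  -- conclude
  have hRHS : (0:ℝ) ≤ B t ^ (-ε) * (c * σ t / (1 - ε * c)) :=
    mul_nonneg (Real.rpow_nonneg hBt.le _)
      (div_nonneg (mul_nonneg hc.le (hσ t ht).le) h1εc.le)
  have hfinal : (∫ x in Ioi t, g x) ≤ B t ^ (-ε) * (c * σ t / (1 - ε * c)) :=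
    (ENNReal.ofReal_le_ofReal_iff hRHS).mp key
  calc (∫ x in Set.Ioi t, σ x * B x ^ (-ε - 1) * (b x / x)) = ∫ x in Ioi t, g x := rfl
    _ ≤ B t ^ (-ε) * (c * σ t / (1 - ε * c)) := hfinal
    _ = (c / (1 - ε * c)) * σ t * B t ^ (-ε) := by ring
end

section
/- Let 0 < q₀ < q₁ ≤ ∞ and let b₀, b₁ be slowly varying functions on (0,∞). Then there is no positive function w on (0,∞) such that both w(t) ≲ b₀(t)/b₁(t) for all t > 0 and (∫₀^t (b₀(s)/b₁(s))^{q₀q₁/(q₀-q₁)} ds/s)^{1/q₁ - 1/q₀} ≲ w(t) for all t > 0 (with the convention that for q₁ = ∞ the second condition is replaced by (∫₀^t (b₀(s)/b₁(s))^{q₀r/(q₀-r)} ds/s)^{1/r - 1/q₀} ≲ w(t) for some r with q₀ < r < ∞). Equivalently, the inequality (∫₀^t (b₀(s)/b₁(s))^{q₀q₁/(q₀-q₁)} ds/s)^{1/q₁-1/q₀} ≲ b₀(t)/b₁(t) cannot hold for all t > 0. -/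
open MeasureTheory Set ENNReal

/-!
Slowly varying functions satisfy Potter bounds: for every `ε > 0` there is `K` with
`b s ≤ K (s/t)^ε b t` and `b t ≤ K (s/t)^ε b s` whenever `0 < t ≤ s`. These bounds pass to
quotients and real powers, so `φ = (b₀/b₁)^p` satisfies them. If `F t = ∫₀^t φ(s) ds/s ≤ C φ(t)`,
then on `(t, 2t]` we have `φ(s)/s ≳ φ(t)/t ≳ F(t)/t`, so `F(2t) ≥ (1 + θ) F(t)` for a fixed
`θ > 0` and `F(2ⁿ)` grows like `(1 + θ)ⁿ`. A Potter bound with small `ε` makes `C φ(2ⁿ)` grow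
at most like `(1 + θ/2)ⁿ`, which is a contradiction.
-/

def HasPotterBounds (b : ℝ → ℝ) : Prop :=
  ∀ ε : ℝ, 0 < ε → ∃ K : ℝ, 0 < K ∧ ∀ t s : ℝ, 0 < t → t ≤ s →
    b s ≤ K * (s / t) ^ ε * b t ∧ b t ≤ K * (s / t) ^ ε * b s

section AlmostMonotone

variable {f g : ℝ → ℝ} {c C t s : ℝ}

lemma le_div_mul_of_monotoneOn (hc : 0 < c) (hC : 0 ≤ C) (hg : MonotoneOn g (Ioi 0))
    (hfg : ∀ u, 0 < u → c * g u ≤ f u ∧ f u ≤ C * g u) (ht : 0 < t) (hts : t ≤ s) :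
    f t ≤ C / c * f s := by
  have hs : 0 < s := ht.trans_le hts
  calc f t ≤ C * g t := (hfg t ht).2
    _ ≤ C * g s := mul_le_mul_of_nonneg_left (hg ht hs hts) hC
    _ ≤ C * (f s / c) := mul_le_mul_of_nonneg_left ((le_div_iff₀' hc).2 (hfg s hs).1) hC
    _ = C / c * f s := by ring

lemma le_div_mul_of_antitoneOn (hc : 0 < c) (hC : 0 ≤ C) (hg : AntitoneOn g (Ioi 0))
    (hfg : ∀ u, 0 < u → c * g u ≤ f u ∧ f u ≤ C * g u) (ht : 0 < t) (hts : t ≤ s) :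
    f s ≤ C / c * f t := by
  have hs : 0 < s := ht.trans_le hts
  calc f s ≤ C * g s := (hfg s hs).2
    _ ≤ C * g t := mul_le_mul_of_nonneg_left (hg ht hs hts) hC
    _ ≤ C * (f t / c) := mul_le_mul_of_nonneg_left ((le_div_iff₀' hc).2 (hfg t ht).1) hC
    _ = C / c * f t := by ring

end AlmostMonotone

lemma SlowlyVarying.pos_s15 {b : ℝ → ℝ} (hb : SlowlyVarying b) {t : ℝ} (ht : 0 < t) : 0 < b t :=
  hb.2.1 t ht

lemma SlowlyVarying.hasPotterBounds {b : ℝ → ℝ} (hb : SlowlyVarying b) : HasPotterBounds b := by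
  intro ε hε
  obtain ⟨⟨g₁, -, hg₁, c₁, C₁, hc₁, hC₁, hb₁⟩, ⟨g₂, -, hg₂, c₂, C₂, hc₂, hC₂, hb₂⟩⟩ := hb.2.2 ε hε
  refine ⟨max (C₁ / c₁) (C₂ / c₂), by positivity, fun t s ht hts => ?_⟩
  have hs : 0 < s := ht.trans_le hts
  have hst : (s / t) ^ ε = s ^ ε * t ^ (-ε) := by
    rw [Real.div_rpow hs.le ht.le, Real.rpow_neg ht.le, div_eq_mul_inv]
  have hbt := (hb.pos_s15 ht).le
  have hbs := (hb.pos_s15 hs).le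
  constructor
  · have key := le_div_mul_of_antitoneOn hc₂ hC₂.le hg₂ hb₂ ht hts
    calc b s = s ^ ε * (s ^ (-ε) * b s) := by
          rw [← mul_assoc, ← Real.rpow_add hs, add_neg_cancel, Real.rpow_zero, one_mul]
      _ ≤ s ^ ε * (C₂ / c₂ * (t ^ (-ε) * b t)) := by gcongr
      _ = C₂ / c₂ * (s / t) ^ ε * b t := by rw [hst]; ring
      _ ≤ max (C₁ / c₁) (C₂ / c₂) * (s / t) ^ ε * b t := by gcongr; exact le_max_right _ _
  · have key := le_div_mul_of_monotoneOn hc₁ hC₁.le hg₁ hb₁ ht hts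
    calc b t = t ^ (-ε) * (t ^ ε * b t) := by
          rw [← mul_assoc, ← Real.rpow_add ht, neg_add_cancel, Real.rpow_zero, one_mul]
      _ ≤ t ^ (-ε) * (C₁ / c₁ * (s ^ ε * b s)) := by gcongr
      _ = C₁ / c₁ * (s / t) ^ ε * b s := by rw [hst]; ring
      _ ≤ max (C₁ / c₁) (C₂ / c₂) * (s / t) ^ ε * b s := by gcongr; exact le_max_left _ _

lemma div_le_mul_mul_div {x₀ y₀ x₁ y₁ M₀ M₁ : ℝ} (hM₀ : 0 ≤ M₀) (hy₀ : 0 ≤ y₀) (hx₁ : 0 < x₁)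
    (hy₁ : 0 < y₁) (h₀ : x₀ ≤ M₀ * y₀) (h₁ : y₁ ≤ M₁ * x₁) : x₀ / x₁ ≤ M₀ * M₁ * (y₀ / y₁) := by
  rw [div_le_iff₀ hx₁]
  calc x₀ ≤ M₀ * (y₀ / y₁) * y₁ := by rwa [mul_assoc, div_mul_cancel₀ _ hy₁.ne']
    _ ≤ M₀ * (y₀ / y₁) * (M₁ * x₁) := by gcongr
    _ = M₀ * M₁ * (y₀ / y₁) * x₁ := by ring

lemma rpow_le_rpow_abs_mul_rpow {x y M : ℝ} (hx : 0 < x) (hy : 0 < y) (hxy : x ≤ M * y)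
    (hyx : y ≤ M * x) (r : ℝ) : x ^ r ≤ M ^ |r| * y ^ r := by
  have hM : 0 < M := pos_of_mul_pos_left (hx.trans_le hxy) hy.le
  rcases le_total 0 r with hr | hr
  · calc x ^ r ≤ (M * y) ^ r := Real.rpow_le_rpow hx.le hxy hr
      _ = M ^ |r| * y ^ r := by rw [abs_of_nonneg hr, Real.mul_rpow hM.le hy.le]
  · have key : M ^ r * x ^ r ≤ y ^ r := by
      rw [← Real.mul_rpow hM.le hx.le]
      exact Real.rpow_le_rpow_of_nonpos hy hyx hr
    calc x ^ r = M ^ (-r) * (M ^ r * x ^ r) := by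
          rw [← mul_assoc, ← Real.rpow_add hM, neg_add_cancel, Real.rpow_zero, one_mul]
      _ ≤ M ^ |r| * y ^ r := by rw [abs_of_nonpos hr]; gcongr

namespace HasPotterBounds

variable {b b₀ b₁ : ℝ → ℝ}

lemma div (h₀ : HasPotterBounds b₀) (h₁ : HasPotterBounds b₁) (hb₀ : ∀ t, 0 < t → 0 < b₀ t)
    (hb₁ : ∀ t, 0 < t → 0 < b₁ t) : HasPotterBounds (fun t => b₀ t / b₁ t) := by
  intro ε hε
  obtain ⟨K₀, hK₀, hP₀⟩ := h₀ (ε / 2) (half_pos hε)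
  obtain ⟨K₁, hK₁, hP₁⟩ := h₁ (ε / 2) (half_pos hε)
  refine ⟨K₀ * K₁, mul_pos hK₀ hK₁, fun t s ht hts => ?_⟩
  have hs : 0 < s := ht.trans_le hts
  have hK : K₀ * (s / t) ^ (ε / 2) * (K₁ * (s / t) ^ (ε / 2)) = K₀ * K₁ * (s / t) ^ ε := by
    rw [mul_mul_mul_comm, ← Real.rpow_add (div_pos hs ht), add_halves]
  rw [← hK]
  exact ⟨div_le_mul_mul_div (by positivity) (hb₀ t ht).le (hb₁ s hs) (hb₁ t ht)
      (hP₀ t s ht hts).1 (hP₁ t s ht hts).2,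
    div_le_mul_mul_div (by positivity) (hb₀ s hs).le (hb₁ t ht) (hb₁ s hs)
      (hP₀ t s ht hts).2 (hP₁ t s ht hts).1⟩

lemma rpow (h : HasPotterBounds b) (hb : ∀ t, 0 < t → 0 < b t) (r : ℝ) :
    HasPotterBounds (fun t => b t ^ r) := by
  intro ε hε
  obtain ⟨K, hK, hP⟩ := h (ε / (|r| + 1)) (by positivity)
  refine ⟨K ^ |r|, by positivity, fun t s ht hts => ?_⟩
  have hs : 0 < s := ht.trans_le hts
  have hM : (K * (s / t) ^ (ε / (|r| + 1))) ^ |r| ≤ K ^ |r| * (s / t) ^ ε := by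
    rw [Real.mul_rpow hK.le (by positivity), ← Real.rpow_mul (div_pos hs ht).le]
    gcongr
    · exact (one_le_div₀ ht).2 hts
    · rw [div_mul_eq_mul_div, div_le_iff₀ (by positivity)]
      nlinarith [abs_nonneg r]
  exact ⟨(rpow_le_rpow_abs_mul_rpow (hb s hs) (hb t ht) (hP t s ht hts).1 (hP t s ht hts).2
      r).trans (mul_le_mul_of_nonneg_right hM (Real.rpow_nonneg (hb t ht).le r)),
    (rpow_le_rpow_abs_mul_rpow (hb t ht) (hb s hs) (hP t s ht hts).2 (hP t s ht hts).1
      r).trans (mul_le_mul_of_nonneg_right hM (Real.rpow_nonneg (hb s hs).le r))⟩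

end HasPotterBounds

lemma not_forall_pow_mul_le {a c A B : ℝ} (hA : 0 < A) (hc : 0 < c) (hca : c < a) :
    ¬ ∀ n : ℕ, a ^ n * A ≤ B * c ^ n := by
  intro h
  obtain ⟨n, hn⟩ := pow_unbounded_of_one_lt (B / A) ((one_lt_div hc).2 hca)
  rw [div_pow, div_lt_div_iff₀ hA (by positivity)] at hn
  linarith [h n]

lemma lintegral_Ioc_add_le_lintegral_Ioc_two_mul {φ : ℝ → ℝ} {K t : ℝ} (hK : 0 < K) (ht : 0 < t)
    (hφ : ∀ s ∈ Ioc t (2 * t), 0 ≤ φ s ∧ φ t ≤ K * φ s) :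
    (∫⁻ s in Ioc 0 t, ENNReal.ofReal (φ s / s)) + ENNReal.ofReal (φ t / (2 * K)) ≤
      ∫⁻ s in Ioc 0 (2 * t), ENNReal.ofReal (φ s / s) := by
  rw [← Ioc_union_Ioc_eq_Ioc ht.le (by linarith : t ≤ 2 * t),
    lintegral_union measurableSet_Ioc (Ioc_disjoint_Ioc_of_le le_rfl)]
  gcongr
  calc ENNReal.ofReal (φ t / (2 * K))
      = ∫⁻ _ in Ioc t (2 * t), ENNReal.ofReal (φ t / (2 * K * t)) := by
        rw [setLIntegral_const, Real.volume_Ioc, ← ENNReal.ofReal_mul' (by linarith)]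
        congr 1
        field_simp
        ring
    _ ≤ ∫⁻ s in Ioc t (2 * t), ENNReal.ofReal (φ s / s) := by
        refine setLIntegral_mono' measurableSet_Ioc fun s ⟨hts, hst⟩ => ?_
        obtain ⟨hφs, hφts⟩ := hφ s ⟨hts, hst⟩
        refine ENNReal.ofReal_le_ofReal ?_
        have hs : 0 < s := ht.trans hts
        calc φ t / (2 * K * t) ≤ K * φ s / (K * s) :=
              div_le_div₀ (by positivity) hφts (by positivity) (by nlinarith)
          _ = φ s / s := mul_div_mul_left _ _ hK.ne'

lemma pow_mul_le_of_add_div_le {f φ : ℝ → ℝ} {C K : ℝ} (hC : 0 < C) (hK : 0 < K)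
    (hf_le : ∀ t, 0 < t → f t ≤ C * φ t) (hf_step : ∀ t, 0 < t → f t + φ t / (2 * K) ≤ f (2 * t))
    (n : ℕ) : (1 + 1 / (2 * K * C)) ^ n * f 1 ≤ f (2 ^ n) := by
  simpa only [pow_zero] using geom_le (u := fun k => f (2 ^ k)) (by positivity) n fun k _ => by
    have h2k : (0 : ℝ) < 2 ^ k := by positivity
    calc (1 + 1 / (2 * K * C)) * f (2 ^ k) ≤ f (2 ^ k) + C * φ (2 ^ k) / (2 * K * C) := by
          have := hf_le _ h2k
          rw [add_mul, one_mul, div_mul_eq_mul_div, one_mul]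
          gcongr
      _ = f (2 ^ k) + φ (2 ^ k) / (2 * K) := by field_simp
      _ ≤ f (2 ^ (k + 1)) := by rw [pow_succ']; exact hf_step _ h2k

namespace HasPotterBounds

variable {φ : ℝ → ℝ}

lemma exists_le_mul_of_le_two_mul (hφ : HasPotterBounds φ) (hpos : ∀ t, 0 < t → 0 < φ t) :
    ∃ K : ℝ, 0 < K ∧ ∀ t s : ℝ, 0 < t → t ≤ s → s ≤ 2 * t → φ t ≤ K * φ s := by
  obtain ⟨K, hK, hP⟩ := hφ 1 one_pos
  refine ⟨2 * K, by positivity, fun t s ht hts hst => (hP t s ht hts).2.trans ?_⟩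
  have hφs := (hpos s (ht.trans_le hts)).le
  rw [Real.rpow_one, mul_comm 2 K]
  gcongr
  rwa [div_le_iff₀ ht]

lemma exists_le_mul_pow_mul {a : ℝ} (hφ : HasPotterBounds φ) (ha : 1 < a) :
    ∃ M : ℝ, ∀ n : ℕ, φ (2 ^ n) ≤ M * a ^ n * φ 1 := by
  obtain ⟨K, -, hP⟩ := hφ (Real.logb 2 a) (Real.logb_pos one_lt_two ha)
  refine ⟨K, fun n => ?_⟩
  have h2a : ((2 : ℝ) ^ n / 1) ^ Real.logb 2 a = a ^ n := by
    rw [div_one, ← Real.rpow_pow_comm zero_le_two,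
      Real.rpow_logb zero_lt_two one_lt_two.ne' (zero_lt_one.trans ha)]
  simpa only [h2a] using (hP 1 (2 ^ n) one_pos (one_le_pow₀ one_le_two)).1

theorem not_exists_lintegral_le (hφ : HasPotterBounds φ) (hpos : ∀ t, 0 < t → 0 < φ t) :
    ¬ ∃ C : ℝ, 0 < C ∧ ∀ t : ℝ, 0 < t →
      (∫⁻ s in Ioc (0:ℝ) t, ENNReal.ofReal (φ s / s)) ≤ ENNReal.ofReal (C * φ t) := by
  rintro ⟨C, hC, hF⟩
  set f : ℝ → ℝ := fun t => (∫⁻ s in Ioc (0:ℝ) t, ENNReal.ofReal (φ s / s)).toReal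
  have hF_ne_top : ∀ t, 0 < t → (∫⁻ s in Ioc (0:ℝ) t, ENNReal.ofReal (φ s / s)) ≠ ⊤ :=
    fun t ht => ne_top_of_le_ne_top ofReal_ne_top (hF t ht)
  have hf_le : ∀ t, 0 < t → f t ≤ C * φ t :=
    fun t ht => toReal_le_of_le_ofReal (mul_pos hC (hpos t ht)).le (hF t ht)
  obtain ⟨K, hK, hdouble⟩ := hφ.exists_le_mul_of_le_two_mul hpos
  have hf_step : ∀ t, 0 < t → f t + φ t / (2 * K) ≤ f (2 * t) := by
    intro t ht
    have hstep := lintegral_Ioc_add_le_lintegral_Ioc_two_mul hK ht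
      fun s hs => ⟨(hpos s (ht.trans hs.1)).le, hdouble t s ht hs.1.le hs.2⟩
    have hφt : 0 ≤ φ t / (2 * K) := by have := hpos t ht; positivity
    rw [← ENNReal.toReal_ofReal hφt, ← toReal_add (hF_ne_top t ht) ofReal_ne_top]
    exact toReal_mono (hF_ne_top _ (by positivity)) hstep
  set θ := 1 / (2 * K * C)
  have hgrowth := pow_mul_le_of_add_div_le hC hK hf_le hf_step
  have hf_one : 0 < f 1 := by
    have h := hf_step (1 / 2) one_half_pos
    rw [mul_one_div_cancel two_ne_zero] at h
    have hφ_half := hpos (1 / 2) one_half_pos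
    have hf_half : 0 ≤ f (1 / 2) := toReal_nonneg
    have : 0 < φ (1 / 2) / (2 * K) := by positivity
    linarith
  have hθ : 0 < θ := by positivity
  obtain ⟨M, hM⟩ := hφ.exists_le_mul_pow_mul (a := 1 + θ / 2) (by linarith)
  refine not_forall_pow_mul_le (B := C * M * φ 1) hf_one (by positivity)
    (by linarith : 1 + θ / 2 < 1 + θ) fun n => ?_
  calc (1 + θ) ^ n * f 1 ≤ f (2 ^ n) := hgrowth n
    _ ≤ C * φ (2 ^ n) := hf_le _ (by positivity)
    _ ≤ C * (M * (1 + θ / 2) ^ n * φ 1) := by gcongr; exact hM n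
    _ = C * M * φ 1 * (1 + θ / 2) ^ n := by ring

end HasPotterBounds

theorem no_holmstedt_weight_general (q₀ q₁ : ℝ)
    (b₀ b₁ : ℝ → ℝ) (hb₀ : SlowlyVarying b₀) (hb₁ : SlowlyVarying b₁) :
    ¬ ∃ C : ℝ, 0 < C ∧ ∀ t : ℝ, 0 < t →
      (∫⁻ s in Set.Ioc (0:ℝ) t,
          ENNReal.ofReal ((b₀ s / b₁ s) ^ (q₀ * q₁ / (q₀ - q₁)) / s)) ≤
        ENNReal.ofReal (C * (b₀ t / b₁ t) ^ (q₀ * q₁ / (q₀ - q₁))) := by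
  have hρ : ∀ t, 0 < t → 0 < b₀ t / b₁ t := fun _ ht => div_pos (hb₀.pos_s15 ht) (hb₁.pos_s15 ht)
  have hφ := (hb₀.hasPotterBounds.div hb₁.hasPotterBounds (fun _ => hb₀.pos_s15)
    (fun _ => hb₁.pos_s15)).rpow hρ (q₀ * q₁ / (q₀ - q₁))
  exact hφ.not_exists_lintegral_le fun t ht => Real.rpow_pos_of_pos (hρ t ht) _

/-- Impossibility at the heart of Theorem 3.6: for `0 < q₀ < q₁ < ∞` and slowly varying
`b₀, b₁`, with `p = q₀q₁/(q₀-q₁) < 0`, one cannot have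
`∫₀^t (b₀(s)/b₁(s))^p ds/s ≲ (b₀(t)/b₁(t))^p` for all `t > 0`. -/
theorem no_holmstedt_weight (q₀ q₁ : ℝ) (hq₀ : 0 < q₀) (hq₀₁ : q₀ < q₁)
    (b₀ b₁ : ℝ → ℝ) (hb₀ : SlowlyVarying b₀) (hb₁ : SlowlyVarying b₁) :
    ¬ ∃ C : ℝ, 0 < C ∧ ∀ t : ℝ, 0 < t →
      (∫⁻ s in Set.Ioc (0:ℝ) t,
          ENNReal.ofReal ((b₀ s / b₁ s) ^ (q₀ * q₁ / (q₀ - q₁)) / s)) ≤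
        ENNReal.ofReal (C * (b₀ t / b₁ t) ^ (q₀ * q₁ / (q₀ - q₁))) :=
  no_holmstedt_weight_general q₀ q₁ b₀ b₁ hb₀ hb₁
end
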